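/- arXiv:2205.15216 — 3 statements merged into one kernel-verified Lean document; each statement's English description precedes it below -/
import Mathlib

section
/- In the lattice arrangement setup, suppose additionally that 9M² · max_{0≤x≤9M²} f'(n₀+x)·f(n₀+x)^{-t-1} ≤ f(n₀+9M²)^{-t}. Then for all 0 ≤ i < M₁−1 and 0 ≤ j < M₂−1, the four squares S_{i,j}, S_{i+1,j}, S_{i,j+1}, S_{i+1,j+1} surround the rectangle T := [x_{i+1,j}, x_{i+1,j+1}] × [y_{i+1,j+1}, y_{i,j+1}]; precisely: x_{i+1,j} = x_{i,j} + f(n_{i,j})^{-t}, x_{i+1,j+1} = x_{i,j+1} + f(n_{i,j+1})^{-t}, y_{i,j+1} = y_{i,j} + f(n_{i,j})^{-t}, y_{i+1,j+1} = y_{i+1,j} + f(n_{i+1,j})^{-t}, and the inequalities y_{i,j} < y_{i+1,j} + f(n_{i+1,j})^{-t}, x_{i,j} < x_{i,j+1} < x_{i,j} + f(n_{i,j})^{-t}, y_{i+1,j+1} < y_{i,j+1} < y_{i+1,j+1} + f(n_{i+1,j+1})^{-t}, and x_{i+1,j} < x_{i+1,j+1} < x_{i+1,j} + f(n_{i+1,j})^{-t}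 hold; consequently the left edge of T lies on the right edge of S_{i,j}, the bottom edge of T lies on the top edge of S_{i+1,j}, the right edge of T lies on the left edge of S_{i+1,j+1}, and the top edge of T lies on the bottom edge of S_{i,j+1}. -/
open Set

/-- The axis-parallel square with lower-left corner `c` and sidelength `s`. -/
noncomputable def square (c : ℝ × ℝ) (s : ℝ) : Set (ℝ × ℝ) :=
  Set.Icc c.1 (c.1 + s) ×ˢ Set.Icc c.2 (c.2 + s)

/-- The index `n_{i,j} = n₀ + j·M₁ + i` of the lattice arrangement. -/
def latticeIndex (n₀ M₁ i j : ℕ) : ℕ := n₀ + j * M₁ + i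

/-- The horizontal coordinate `x_{i,j} = w(R) − ∑_{i'=i}^{M₁} f(n_{i',j})^{-t}`. -/
noncomputable def latticeX (f : ℝ → ℝ) (t wR : ℝ) (n₀ M₁ : ℕ) (i j : ℕ) : ℝ :=
  wR - ∑ i' ∈ Finset.Icc i M₁, f ((latticeIndex n₀ M₁ i' j : ℕ) : ℝ) ^ (-t)

/-- The vertical coordinate `y_{i,j} = ∑_{j'=0}^{j-1} f(n_{i,j'})^{-t}` (so `y_{i,0} = 0`). -/
noncomputable def latticeY (f : ℝ → ℝ) (t : ℝ) (n₀ M₁ : ℕ) (i j : ℕ) : ℝ :=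
  ∑ j' ∈ Finset.range j, f ((latticeIndex n₀ M₁ i j' : ℕ) : ℝ) ^ (-t)

/-- Reindexing a sum over `Icc p m` as a sum over `range (m+1-p)`. -/
lemma sum_Icc_eq_range (p m : ℕ) (F : ℕ → ℝ) (hp : p ≤ m) :
    ∑ k ∈ Finset.Icc p m, F k = ∑ l ∈ Finset.range (m + 1 - p), F (p + l) := by
  apply Finset.sum_nbij' (i := fun k => k - p) (j := fun l => p + l)
  · intro k hk; simp only [Finset.mem_Icc] at hk; simp only [Finset.mem_range]; omega
  · intro l hl; simp only [Finset.mem_range] at hl; simp only [Finset.mem_Icc]; omega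
  · intro k hk; simp only [Finset.mem_Icc] at hk; omega
  · intro l hl; omega
  · intro k hk; simp only [Finset.mem_Icc] at hk; congr 1; omega


lemma aux_anti (t : ℝ) (ht : 0 < t) (f : ℝ → ℝ)
    (hf_incr : StrictMonoOn f (Set.Ici 1)) (hf_pos : ∀ x : ℝ, 1 ≤ x → 0 < f x)
    (u v : ℝ) (hu : 1 ≤ u) (huv : u ≤ v) : f v ^ (-t) ≤ f u ^ (-t) :=
  Real.rpow_le_rpow_of_nonpos (hf_pos u hu)
    (hf_incr.monotoneOn (Set.mem_Ici.mpr hu) (Set.mem_Ici.mpr (hu.trans huv)) huv)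
    (by linarith)

lemma aux_anti' (t : ℝ) (ht : 0 < t) (f : ℝ → ℝ)
    (hf_incr : StrictMonoOn f (Set.Ici 1)) (hf_pos : ∀ x : ℝ, 1 ≤ x → 0 < f x)
    (u v : ℝ) (hu : 1 ≤ u) (huv : u < v) : f v ^ (-t) < f u ^ (-t) :=
  Real.rpow_lt_rpow_of_neg (hf_pos u hu)
    (hf_incr (Set.mem_Ici.mpr hu) (Set.mem_Ici.mpr (hu.trans huv.le)) huv)
    (by linarith)

/-- the basic mean value theorem estimate -/
lemma aux_key
    (t : ℝ) (ht₁ : 1 / 2 < t) (ht₂ : t < 1)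
    (f : ℝ → ℝ)
    (hf_smooth : ContDiffOn ℝ (⊤ : ℕ∞) f (Set.Ici 1))
    (hf_incr : StrictMonoOn f (Set.Ici 1))
    (hf_pos : ∀ x : ℝ, 1 ≤ x → 0 < f x)
    (n₀ M M₁ M₂ : ℕ) (hn₀ : 0 < n₀) (hM : 0 < M)
    (hMM₁ : M ≤ M₁) (hM₁M₂ : M₁ ≤ M₂) (hM₂ : M₂ ≤ 3 * M)
    (hX : ∀ x ∈ Set.Icc (0 : ℝ) (9 * (M : ℝ) ^ 2),
      9 * (M : ℝ) ^ 2 *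
          (derivWithin f (Set.Ici 1) ((n₀ : ℝ) + x) * f ((n₀ : ℝ) + x) ^ (-t - 1)) ≤
        f ((n₀ : ℝ) + 9 * (M : ℝ) ^ 2) ^ (-t))
 :
    ∀ u v : ℝ, (n₀ : ℝ) ≤ u → u ≤ v → v ≤ (n₀ : ℝ) + 9 * (M : ℝ) ^ 2 →
      f u ^ (-t) - f v ^ (-t)
        ≤ (v - u) * (t * (f ((n₀ : ℝ) + 9 * (M : ℝ) ^ 2) ^ (-t) / (9 * (M : ℝ) ^ 2))) := by
  have h1n : (1 : ℝ) ≤ (n₀ : ℝ) := by exact_mod_cast hn₀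
  have hMR : (1 : ℝ) ≤ (M : ℝ) := by exact_mod_cast hM
  have hM2pos : (0 : ℝ) < 9 * (M : ℝ) ^ 2 := by positivity
  have ht0 : (0 : ℝ) ≤ t := by linarith
  intro u v hu huv hv
  rcases eq_or_lt_of_le huv with rfl | hlt
  · rw [sub_self, sub_self, zero_mul]
  · have h1u : (1 : ℝ) ≤ u := h1n.trans hu
    have hsub : Set.Icc u v ⊆ Set.Ici 1 := fun x hx => h1u.trans hx.1
    have hfc : ContinuousOn (fun y => f y ^ (-t)) (Set.Icc u v) :=
      ContinuousOn.rpow_const (hf_smooth.continuousOn.mono hsub)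
        (fun x hx => Or.inl (hf_pos x (hsub hx)).ne')
    have hder : ∀ x ∈ Set.Ioo u v,
        HasDerivAt (fun y => f y ^ (-t)) (deriv f x * (-t) * f x ^ (-t - 1)) x := by
      intro x hx
      have hx1 : 1 < x := lt_of_le_of_lt h1u hx.1
      have hdf : DifferentiableAt ℝ f x :=
        (hf_smooth.contDiffAt (Ici_mem_nhds hx1)).differentiableAt (by simp)
      exact hdf.hasDerivAt.rpow_const (Or.inl (hf_pos x hx1.le).ne')
    obtain ⟨c, hc, hceq⟩ := exists_hasDerivAt_eq_slope (fun y => f y ^ (-t)) _ hlt hfc hder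
    have hc1 : 1 < c := lt_of_le_of_lt h1u hc.1
    have hDc : deriv f c * f c ^ (-t - 1)
        ≤ f ((n₀ : ℝ) + 9 * (M : ℝ) ^ 2) ^ (-t) / (9 * (M : ℝ) ^ 2) := by
      have hxmem : c - (n₀ : ℝ) ∈ Set.Icc (0 : ℝ) (9 * (M : ℝ) ^ 2) :=
        ⟨by linarith [hc.1, hu], by linarith [hc.2, hv]⟩
      have hXc := hX _ hxmem
      rw [show (n₀ : ℝ) + (c - (n₀ : ℝ)) = c by ring] at hXc
      rw [derivWithin_of_mem_nhds (Ici_mem_nhds hc1)] at hXc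
      rw [le_div_iff₀ hM2pos]
      linarith
    rw [eq_div_iff (sub_ne_zero.mpr hlt.ne')] at hceq
    have heq : f u ^ (-t) - f v ^ (-t) = (v - u) * (t * (deriv f c * f c ^ (-t - 1))) := by
      linear_combination hceq
    rw [heq]
    exact mul_le_mul_of_nonneg_left (mul_le_mul_of_nonneg_left hDc ht0) (by linarith)

set_option maxHeartbeats 2000000 in
/-- the key diagonal estimate for `latticeY` -/
lemma aux_y_lt
    (t : ℝ) (ht₁ : 1 / 2 < t) (ht₂ : t < 1)
    (f : ℝ → ℝ)
    (hf_smooth : ContDiffOn ℝ (⊤ : ℕ∞) f (Set.Ici 1))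
    (hf_incr : StrictMonoOn f (Set.Ici 1))
    (hf_pos : ∀ x : ℝ, 1 ≤ x → 0 < f x)
    (n₀ M M₁ M₂ : ℕ) (hn₀ : 0 < n₀) (hM : 0 < M)
    (hMM₁ : M ≤ M₁) (hM₁M₂ : M₁ ≤ M₂) (hM₂ : M₂ ≤ 3 * M)
    (hX : ∀ x ∈ Set.Icc (0 : ℝ) (9 * (M : ℝ) ^ 2),
      9 * (M : ℝ) ^ 2 *
          (derivWithin f (Set.Ici 1) ((n₀ : ℝ) + x) * f ((n₀ : ℝ) + x) ^ (-t - 1)) ≤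
        f ((n₀ : ℝ) + 9 * (M : ℝ) ^ 2) ^ (-t))
 :
    ∀ p q : ℕ, p + 1 ≤ M₁ → q + 1 ≤ M₂ →
      latticeY f t n₀ M₁ p q < latticeY f t n₀ M₁ (p+1) (q+1) := by
  have h1n : (1 : ℝ) ≤ (n₀ : ℝ) := by exact_mod_cast hn₀
  have hMR : (1 : ℝ) ≤ (M : ℝ) := by exact_mod_cast hM
  have hM2pos : (0 : ℝ) < 9 * (M : ℝ) ^ 2 := by positivity
  have ht0 : (0 : ℝ) ≤ t := by linarith
  obtain ⟨C, hC⟩ : ∃ C : ℝ, C = f ((n₀ : ℝ) + 9 * (M : ℝ) ^ 2) ^ (-t) := ⟨_, rfl⟩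
  have hCpos : 0 < C := by rw [hC]; exact Real.rpow_pos_of_pos (hf_pos _ (by nlinarith)) _
  obtain ⟨C9, hC9⟩ : ∃ C9 : ℝ, C9 = C / (9 * (M : ℝ) ^ 2) := ⟨_, rfl⟩
  have hC9pos : 0 < C9 := by rw [hC9]; exact div_pos hCpos hM2pos
  have h9C9 : 9 * (M : ℝ) ^ 2 * C9 = C := by rw [hC9]; field_simp
  have hMM : M₂ * M₁ ≤ 9 * M ^ 2 := by
    calc M₂ * M₁ ≤ (3 * M) * (3 * M) := Nat.mul_le_mul hM₂ (hM₁M₂.trans hM₂)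
    _ = 9 * M ^ 2 := by ring
  have hcast9 : ∀ m : ℕ, m ≤ n₀ + M₂ * M₁ → (m : ℝ) ≤ (n₀ : ℝ) + 9 * (M : ℝ) ^ 2 := by
    intro m hm
    have h4 : m ≤ n₀ + 9 * M ^ 2 := hm.trans (Nat.add_le_add_left hMM _)
    have h5 : (m : ℝ) ≤ ((n₀ + 9 * M ^ 2 : ℕ) : ℝ) := Nat.cast_le.mpr h4
    push_cast at h5
    exact h5
  have keyN : ∀ u v : ℕ, n₀ ≤ u → u ≤ v → v ≤ n₀ + M₂ * M₁ →
      f (u : ℝ) ^ (-t) - f (v : ℝ) ^ (-t) ≤ ((v : ℝ) - (u : ℝ)) * (t * C9) := by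
    intro u v h1 h2 h3
    rw [hC9, hC]
    exact aux_key t ht₁ ht₂ f hf_smooth hf_incr hf_pos n₀ M M₁ M₂ hn₀ hM hMM₁ hM₁M₂ hM₂ hX
      _ _ (by exact_mod_cast h1) (by exact_mod_cast h2) (hcast9 v h3)
  have hganti : ∀ m : ℕ, n₀ ≤ m → m ≤ n₀ + M₂ * M₁ → C ≤ f (m : ℝ) ^ (-t) := by
    intro m h1 h2
    have h1' : (1 : ℝ) ≤ (m : ℝ) := by
      have : (n₀ : ℝ) ≤ (m : ℝ) := by exact_mod_cast h1
      linarith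
    rw [hC]
    exact aux_anti t (by linarith) f hf_incr hf_pos (m : ℝ) _ h1' (hcast9 m h2)
  intro p q hp hq
  simp only [latticeY, latticeIndex, Finset.sum_range_succ]
  have hterm : ∀ j' ∈ Finset.range q,
      f ((n₀ + j' * M₁ + p : ℕ) : ℝ) ^ (-t) - f ((n₀ + j' * M₁ + (p+1) : ℕ) : ℝ) ^ (-t)
        ≤ t * C9 := by
    intro j' hj'
    have hj'q : j' < q := Finset.mem_range.mp hj'
    have hb : n₀ + j' * M₁ + (p+1) ≤ n₀ + M₂ * M₁ := by
      have h1 : (j' + 1) * M₁ ≤ M₂ * M₁ := Nat.mul_le_mul_right _ (by omega)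
      have h2 : (j' + 1) * M₁ = j' * M₁ + M₁ := by ring
      omega
    have hk := keyN (n₀ + j' * M₁ + p) (n₀ + j' * M₁ + (p+1)) (by omega) (by omega) hb
    have hd : ((n₀ + j' * M₁ + (p+1) : ℕ) : ℝ) - ((n₀ + j' * M₁ + p : ℕ) : ℝ) = 1 := by
      push_cast; ring
    rw [hd, one_mul] at hk
    exact hk
  have hsum := Finset.sum_le_sum hterm
  rw [Finset.sum_sub_distrib, Finset.sum_const, Finset.card_range, nsmul_eq_mul] at hsum
  have hCle : C ≤ f ((n₀ + q * M₁ + (p+1) : ℕ) : ℝ) ^ (-t) := by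
    apply hganti _ (by omega)
    have h1 : (q + 1) * M₁ ≤ M₂ * M₁ := Nat.mul_le_mul_right _ (by omega)
    have h2 : (q + 1) * M₁ = q * M₁ + M₁ := by ring
    omega
  have hnum : (q : ℝ) * (t * C9) < C := by
    rw [← h9C9]
    have hq3 : (q : ℝ) + 1 ≤ 3 * (M : ℝ) := by exact_mod_cast hq.trans hM₂
    have hq0 : (0 : ℝ) ≤ (q : ℝ) := Nat.cast_nonneg q
    have hqt : (q : ℝ) * t ≤ (q : ℝ) := mul_le_of_le_one_right hq0 ht₂.le
    have h9 : (q : ℝ) * t < 9 * (M : ℝ) ^ 2 := by nlinarith [sq_nonneg ((M : ℝ) - 1)]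
    nlinarith [hC9pos]
  linarith

set_option maxHeartbeats 2000000 in
/-- the key horizontal estimate for `latticeX` -/
lemma aux_x_lt2
    (t : ℝ) (ht₁ : 1 / 2 < t) (ht₂ : t < 1)
    (f : ℝ → ℝ)
    (hf_smooth : ContDiffOn ℝ (⊤ : ℕ∞) f (Set.Ici 1))
    (hf_incr : StrictMonoOn f (Set.Ici 1))
    (hf_pos : ∀ x : ℝ, 1 ≤ x → 0 < f x)
    (n₀ M M₁ M₂ : ℕ) (hn₀ : 0 < n₀) (hM : 0 < M)
    (hMM₁ : M ≤ M₁) (hM₁M₂ : M₁ ≤ M₂) (hM₂ : M₂ ≤ 3 * M)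
    (hX : ∀ x ∈ Set.Icc (0 : ℝ) (9 * (M : ℝ) ^ 2),
      9 * (M : ℝ) ^ 2 *
          (derivWithin f (Set.Ici 1) ((n₀ : ℝ) + x) * f ((n₀ : ℝ) + x) ^ (-t - 1)) ≤
        f ((n₀ : ℝ) + 9 * (M : ℝ) ^ 2) ^ (-t))
    (wR : ℝ) :
    ∀ p q : ℕ, p < M₁ → q + 2 ≤ M₂ →
      latticeX f t wR n₀ M₁ p (q+1)
        < latticeX f t wR n₀ M₁ p q + f ((latticeIndex n₀ M₁ p q : ℕ) : ℝ) ^ (-t) := by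
  have h1n : (1 : ℝ) ≤ (n₀ : ℝ) := by exact_mod_cast hn₀
  have hMR : (1 : ℝ) ≤ (M : ℝ) := by exact_mod_cast hM
  have hM2pos : (0 : ℝ) < 9 * (M : ℝ) ^ 2 := by positivity
  have ht0 : (0 : ℝ) ≤ t := by linarith
  obtain ⟨C, hC⟩ : ∃ C : ℝ, C = f ((n₀ : ℝ) + 9 * (M : ℝ) ^ 2) ^ (-t) := ⟨_, rfl⟩
  have hCpos : 0 < C := by rw [hC]; exact Real.rpow_pos_of_pos (hf_pos _ (by nlinarith)) _
  obtain ⟨C9, hC9⟩ : ∃ C9 : ℝ, C9 = C / (9 * (M : ℝ) ^ 2) := ⟨_, rfl⟩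
  have hC9pos : 0 < C9 := by rw [hC9]; exact div_pos hCpos hM2pos
  have h9C9 : 9 * (M : ℝ) ^ 2 * C9 = C := by rw [hC9]; field_simp
  have hMM : M₂ * M₁ ≤ 9 * M ^ 2 := by
    calc M₂ * M₁ ≤ (3 * M) * (3 * M) := Nat.mul_le_mul hM₂ (hM₁M₂.trans hM₂)
    _ = 9 * M ^ 2 := by ring
  have hcast9 : ∀ m : ℕ, m ≤ n₀ + M₂ * M₁ → (m : ℝ) ≤ (n₀ : ℝ) + 9 * (M : ℝ) ^ 2 := by
    intro m hm
    have h4 : m ≤ n₀ + 9 * M ^ 2 := hm.trans (Nat.add_le_add_left hMM _)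
    have h5 : (m : ℝ) ≤ ((n₀ + 9 * M ^ 2 : ℕ) : ℝ) := Nat.cast_le.mpr h4
    push_cast at h5
    exact h5
  have keyN : ∀ u v : ℕ, n₀ ≤ u → u ≤ v → v ≤ n₀ + M₂ * M₁ →
      f (u : ℝ) ^ (-t) - f (v : ℝ) ^ (-t) ≤ ((v : ℝ) - (u : ℝ)) * (t * C9) := by
    intro u v h1 h2 h3
    rw [hC9, hC]
    exact aux_key t ht₁ ht₂ f hf_smooth hf_incr hf_pos n₀ M M₁ M₂ hn₀ hM hMM₁ hM₁M₂ hM₂ hX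
      _ _ (by exact_mod_cast h1) (by exact_mod_cast h2) (hcast9 v h3)
  have hganti : ∀ m : ℕ, n₀ ≤ m → m ≤ n₀ + M₂ * M₁ → C ≤ f (m : ℝ) ^ (-t) := by
    intro m h1 h2
    have h1' : (1 : ℝ) ≤ (m : ℝ) := by
      have : (n₀ : ℝ) ≤ (m : ℝ) := by exact_mod_cast h1
      linarith
    rw [hC]
    exact aux_anti t (by linarith) f hf_incr hf_pos (m : ℝ) _ h1' (hcast9 m h2)
  intro p q hp hq
  have hmul1 : (q + 1) * M₁ = q * M₁ + M₁ := by ring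
  have hmul2 : (q + 2) * M₁ ≤ M₂ * M₁ := Nat.mul_le_mul_right _ (by omega)
  have hmul3 : (q + 2) * M₁ = q * M₁ + 2 * M₁ := by ring
  obtain ⟨N, hpN⟩ : ∃ N, p + N + 1 = M₁ := ⟨M₁ - p - 1, by omega⟩
  have e1 : ∑ k ∈ Finset.Icc p M₁, f ((n₀ + q * M₁ + k : ℕ) : ℝ) ^ (-t)
      = (∑ l ∈ Finset.range (N+1), f ((n₀ + q * M₁ + (p+(l+1)) : ℕ) : ℝ) ^ (-t))
        + f ((n₀ + q * M₁ + (p+0) : ℕ) : ℝ) ^ (-t) := by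
    rw [sum_Icc_eq_range p M₁ _ (by omega), show M₁ + 1 - p = N + 1 + 1 by omega]
    exact Finset.sum_range_succ' _ _
  have e2 : ∑ k ∈ Finset.Icc p M₁, f ((n₀ + (q+1) * M₁ + k : ℕ) : ℝ) ^ (-t)
      = (∑ l ∈ Finset.range (N+1), f ((n₀ + (q+1) * M₁ + (p+l) : ℕ) : ℝ) ^ (-t))
        + f ((n₀ + (q+1) * M₁ + (p+(N+1)) : ℕ) : ℝ) ^ (-t) := by
    rw [sum_Icc_eq_range p M₁ _ (by omega), show M₁ + 1 - p = N + 1 + 1 by omega]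
    exact Finset.sum_range_succ _ _
  simp only [latticeX, latticeIndex]
  rw [e1, e2]
  have hterm : ∀ l ∈ Finset.range (N+1),
      f ((n₀ + q * M₁ + (p+(l+1)) : ℕ) : ℝ) ^ (-t)
        - f ((n₀ + (q+1) * M₁ + (p+l) : ℕ) : ℝ) ^ (-t)
        ≤ ((M₁ : ℝ) - 1) * (t * C9) := by
    intro l hl
    have hlN : l < N + 1 := Finset.mem_range.mp hl
    have hk := keyN (n₀ + q * M₁ + (p+(l+1))) (n₀ + (q+1) * M₁ + (p+l))
      (by omega) (by omega) (by omega)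
    have hd : ((n₀ + (q+1) * M₁ + (p+l) : ℕ) : ℝ) - ((n₀ + q * M₁ + (p+(l+1)) : ℕ) : ℝ)
        = (M₁ : ℝ) - 1 := by push_cast; ring
    rw [hd] at hk
    exact hk
  have hsum := Finset.sum_le_sum hterm
  rw [Finset.sum_sub_distrib, Finset.sum_const, Finset.card_range, nsmul_eq_mul] at hsum
  have hCle : C ≤ f ((n₀ + (q+1) * M₁ + (p+(N+1)) : ℕ) : ℝ) ^ (-t) :=
    hganti _ (by omega) (by omega)
  have hnum : ((N+1 : ℕ) : ℝ) * (((M₁ : ℝ) - 1) * (t * C9)) < C := by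
    rw [← h9C9]
    have hN3 : ((N+1 : ℕ) : ℝ) ≤ 3 * (M : ℝ) := by
      exact_mod_cast (by omega : N + 1 ≤ 3 * M)
    have hM₁3 : (M₁ : ℝ) ≤ 3 * (M : ℝ) := by exact_mod_cast hM₁M₂.trans hM₂
    have hM₁1 : (1 : ℝ) ≤ (M₁ : ℝ) := by exact_mod_cast (by omega : 1 ≤ M₁)
    have hN0 : (0 : ℝ) ≤ ((N+1 : ℕ) : ℝ) := Nat.cast_nonneg _
    have h1 : ((N+1 : ℕ) : ℝ) * (((M₁ : ℝ) - 1) * t)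
        ≤ (3 * (M : ℝ)) * ((3 * (M : ℝ) - 1) * 1) := by
      apply mul_le_mul hN3 _ (by nlinarith) (by linarith)
      apply mul_le_mul (by linarith) ht₂.le ht0 (by linarith)
    have h2 : (3 * (M : ℝ)) * ((3 * (M : ℝ) - 1) * 1) < 9 * (M : ℝ) ^ 2 := by nlinarith
    nlinarith [hC9pos]
  simp only [Nat.add_zero]
  linarith

theorem four_squares_surround_a_rectangle
    (t : ℝ) (ht₁ : 1 / 2 < t) (ht₂ : t < 1)
    (f : ℝ → ℝ)
    (hf_smooth : ContDiffOn ℝ (⊤ : ℕ∞) f (Set.Ici 1))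
    (hf_incr : StrictMonoOn f (Set.Ici 1))
    (hf_pos : ∀ x : ℝ, 1 ≤ x → 0 < f x)
    (n₀ M M₁ M₂ : ℕ) (hn₀ : 0 < n₀) (hM : 0 < M)
    (hMM₁ : M ≤ M₁) (hM₁M₂ : M₁ ≤ M₂) (hM₂ : M₂ ≤ 3 * M)
    (wR hR : ℝ)
    (hw₁ : (M₁ : ℝ) * f (n₀ : ℝ) ^ (-t) ≤ wR) (hw₂ : wR < ((M₁ : ℝ) + 1) * f (n₀ : ℝ) ^ (-t))
    (hh₁ : (M₂ : ℝ) * f (n₀ : ℝ) ^ (-t) ≤ hR) (hh₂ : hR < ((M₂ : ℝ) + 1) * f (n₀ : ℝ) ^ (-t))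
    -- the extra derivative hypothesis (X)
    (hX : ∀ x ∈ Set.Icc (0 : ℝ) (9 * (M : ℝ) ^ 2),
      9 * (M : ℝ) ^ 2 *
          (derivWithin f (Set.Ici 1) ((n₀ : ℝ) + x) * f ((n₀ : ℝ) + x) ^ (-t - 1)) ≤
        f ((n₀ : ℝ) + 9 * (M : ℝ) ^ 2) ^ (-t)) :
    ∀ i j : ℕ, i + 1 < M₁ → j + 1 < M₂ →
      -- abbreviations
      (fun (x : ℕ → ℕ → ℝ) (y : ℕ → ℕ → ℝ) (s : ℕ → ℕ → ℝ) =>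
        -- the four equalities
        (x (i+1) j = x i j + s i j) ∧
        (x (i+1) (j+1) = x i (j+1) + s i (j+1)) ∧
        (y i (j+1) = y i j + s i j) ∧
        (y (i+1) (j+1) = y (i+1) j + s (i+1) j) ∧
        -- the inequalities
        (y i j < y (i+1) j + s (i+1) j) ∧
        (x i j < x i (j+1)) ∧ (x i (j+1) < x i j + s i j) ∧
        (y (i+1) (j+1) < y i (j+1)) ∧ (y i (j+1) < y (i+1) (j+1) + s (i+1) (j+1)) ∧
        (x (i+1) j < x (i+1) (j+1)) ∧ (x (i+1) (j+1) < x (i+1) j + s (i+1) j) ∧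
        -- consequently, with T = [x_{i+1,j}, x_{i+1,j+1}] × [y_{i+1,j+1}, y_{i,j+1}]:
        -- the left edge of T lies on the right edge of S_{i,j}
        (({x (i+1) j} : Set ℝ) ×ˢ Set.Icc (y (i+1) (j+1)) (y i (j+1)) ⊆
          ({x i j + s i j} : Set ℝ) ×ˢ Set.Icc (y i j) (y i j + s i j)) ∧
        -- the bottom edge of T lies on the top edge of S_{i+1,j}
        (Set.Icc (x (i+1) j) (x (i+1) (j+1)) ×ˢ ({y (i+1) (j+1)} : Set ℝ) ⊆
          Set.Icc (x (i+1) j) (x (i+1) j + s (i+1) j) ×ˢ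
            ({y (i+1) j + s (i+1) j} : Set ℝ)) ∧
        -- the right edge of T lies on the left edge of S_{i+1,j+1}
        (({x (i+1) (j+1)} : Set ℝ) ×ˢ Set.Icc (y (i+1) (j+1)) (y i (j+1)) ⊆
          ({x (i+1) (j+1)} : Set ℝ) ×ˢ
            Set.Icc (y (i+1) (j+1)) (y (i+1) (j+1) + s (i+1) (j+1))) ∧
        -- the top edge of T lies on the bottom edge of S_{i,j+1}
        (Set.Icc (x (i+1) j) (x (i+1) (j+1)) ×ˢ ({y i (j+1)} : Set ℝ) ⊆
          Set.Icc (x i (j+1)) (x i (j+1) + s i (j+1)) ×ˢ ({y i (j+1)} : Set ℝ)))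
      (fun i j => latticeX f t wR n₀ M₁ i j)
      (fun i j => latticeY f t n₀ M₁ i j)
      (fun i j => f ((latticeIndex n₀ M₁ i j : ℕ) : ℝ) ^ (-t)) := by
  intro i j hi hj
  beta_reduce
  -- equality lemmas
  have hy_succ : ∀ p q : ℕ, latticeY f t n₀ M₁ p (q+1)
      = latticeY f t n₀ M₁ p q + f ((latticeIndex n₀ M₁ p q : ℕ) : ℝ) ^ (-t) := by
    intro p q
    simp only [latticeY, Finset.sum_range_succ]
  have hx_succ : ∀ p q : ℕ, p < M₁ → latticeX f t wR n₀ M₁ (p+1) q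
      = latticeX f t wR n₀ M₁ p q + f ((latticeIndex n₀ M₁ p q : ℕ) : ℝ) ^ (-t) := by
    intro p q hp
    simp only [latticeX]
    rw [show Finset.Icc p M₁ = insert p (Finset.Icc (p+1) M₁) from by
        ext k; simp only [Finset.mem_Icc, Finset.mem_insert]; omega,
      Finset.sum_insert (by simp only [Finset.mem_Icc]; omega)]
    ring
  -- strict antitonicity of y in i
  have hy_anti : ∀ p q : ℕ, latticeY f t n₀ M₁ (p+1) (q+1) < latticeY f t n₀ M₁ p (q+1) := by
    intro p q
    simp only [latticeY, latticeIndex]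
    apply Finset.sum_lt_sum_of_nonempty ⟨0, Finset.mem_range.mpr (Nat.succ_pos _)⟩
    intro j' _
    exact aux_anti' t (by linarith) f hf_incr hf_pos
      ((n₀ + j' * M₁ + p : ℕ) : ℝ) ((n₀ + j' * M₁ + (p+1) : ℕ) : ℝ)
      (by exact_mod_cast Nat.one_le_iff_ne_zero.mpr (by omega))
      (by exact_mod_cast (by omega : n₀ + j' * M₁ + p < n₀ + j' * M₁ + (p+1)))
  -- strict monotonicity of x in j
  have hx_mono : ∀ p q : ℕ, p ≤ M₁ →
      latticeX f t wR n₀ M₁ p q < latticeX f t wR n₀ M₁ p (q+1) := by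
    intro p q hp
    simp only [latticeX, latticeIndex]
    have hlt : ∑ k ∈ Finset.Icc p M₁, f ((n₀ + (q+1) * M₁ + k : ℕ) : ℝ) ^ (-t)
        < ∑ k ∈ Finset.Icc p M₁, f ((n₀ + q * M₁ + k : ℕ) : ℝ) ^ (-t) := by
      apply Finset.sum_lt_sum_of_nonempty (Finset.nonempty_Icc.mpr hp)
      intro k _
      have h2 : (q + 1) * M₁ = q * M₁ + M₁ := by ring
      have h3 : 1 ≤ M₁ := by omega
      exact aux_anti' t (by linarith) f hf_incr hf_pos
        ((n₀ + q * M₁ + k : ℕ) : ℝ) ((n₀ + (q+1) * M₁ + k : ℕ) : ℝ)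
        (by exact_mod_cast Nat.one_le_iff_ne_zero.mpr (by omega))
        (by exact_mod_cast (by omega : n₀ + q * M₁ + k < n₀ + (q+1) * M₁ + k))
    linarith
  have hy_lt := aux_y_lt t ht₁ ht₂ f hf_smooth hf_incr hf_pos n₀ M M₁ M₂ hn₀ hM hMM₁ hM₁M₂ hM₂ hX
  have hx_lt2 := aux_x_lt2 t ht₁ ht₂ f hf_smooth hf_incr hf_pos n₀ M M₁ M₂ hn₀ hM hMM₁ hM₁M₂ hM₂ hX wR
  -- assemble everything
  have eq1 := hx_succ i j (by omega)
  have eq2 := hx_succ i (j+1) (by omega)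
  have eq3 := hy_succ i j
  have eq4 := hy_succ (i+1) j
  have h54 : latticeY f t n₀ M₁ i j < latticeY f t n₀ M₁ (i+1) (j+1) :=
    hy_lt i j (by omega) (by omega)
  have ineq5 : latticeY f t n₀ M₁ i j
      < latticeY f t n₀ M₁ (i+1) j + f ((latticeIndex n₀ M₁ (i+1) j : ℕ) : ℝ) ^ (-t) := by
    rw [← hy_succ (i+1) j]; exact h54
  have ineq6 := hx_mono i j (by omega)
  have ineq7 := hx_lt2 i j (by omega) (by omega)
  have ineq8 := hy_anti i j
  have ineq9 : latticeY f t n₀ M₁ i (j+1)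
      < latticeY f t n₀ M₁ (i+1) (j+1) + f ((latticeIndex n₀ M₁ (i+1) (j+1) : ℕ) : ℝ) ^ (-t) := by
    rw [← hy_succ (i+1) (j+1)]; exact hy_lt i (j+1) (by omega) (by omega)
  have ineq10 := hx_mono (i+1) j (by omega)
  have ineq11 := hx_lt2 (i+1) j (by omega) (by omega)
  refine ⟨eq1, eq2, eq3, eq4, ineq5, ineq6, ineq7, ineq8, ineq9, ineq10, ineq11, ?_, ?_, ?_, ?_⟩
  · -- left edge
    rw [← eq1, ← eq3]
    exact Set.prod_mono subset_rfl (Set.Icc_subset_Icc h54.le le_rfl)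
  · -- bottom edge
    rw [← eq4]
    exact Set.prod_mono (Set.Icc_subset_Icc le_rfl ineq11.le) subset_rfl
  · -- right edge
    exact Set.prod_mono subset_rfl (Set.Icc_subset_Icc le_rfl ineq9.le)
  · -- top edge
    apply Set.prod_mono _ subset_rfl
    apply Set.Icc_subset_Icc
    · rw [eq1]; exact ineq7.le
    · exact eq2.le
end

section
/- Assume there are infinitely many twin primes (so that the n-th twin prime 𝔭_n is defined for all n), and assume there exist constants C > 0, c > 0 and x₁ ≥ 2 such that π₂(x) ≤ C·Π₂·x/(log x)²·(1 + c·(log log x)/(log x)) for all x ≥ x₁. Then for any 1/2 < t < 1 and any C' > C, there exists a positive integer N₀, depending on t and C', such that for every integer n₀ ≥ N₀ the squares of sidelength 𝔭_n^{-t} for n ≥ n₀ can be packed into a square of area (C'·Π₂)^{2t}·∑_{n=n₀}^{∞} (n·(log n)²)^{-2t}. -/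
open Set MeasureTheory

/-- A prime `p` is a twin prime if at least one of `p − 2`, `p + 2` is also prime. -/
def IsTwinPrime (p : ℕ) : Prop :=
  Nat.Prime p ∧ (Nat.Prime (p - 2) ∨ Nat.Prime (p + 2))

/-- The `n`-th twin prime, 1-indexed: `nthTwinPrime 1 = 3`, `nthTwinPrime 2 = 5`, ... -/
noncomputable def nthTwinPrime (n : ℕ) : ℕ := Nat.nth IsTwinPrime (n - 1)

/-- `twinPrimeCounting x` is the number of twin primes `≤ x`. -/
noncomputable def twinPrimeCounting (x : ℝ) : ℕ :=
  {p : ℕ | IsTwinPrime p ∧ (p : ℝ) ≤ x}.ncard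

/-- The twin prime constant `Π₂ = ∏_{p prime, p ≥ 3} (1 − 1/(p−1)²)`. -/
noncomputable def twinPrimeConstant : ℝ :=
  ∏' p : {p : ℕ // Nat.Prime p ∧ 3 ≤ p}, (1 - 1 / (((p : ℕ) : ℝ) - 1) ^ 2)

/-! ### Auxiliary: shelf packing -/

noncomputable def shelf (s : ℕ → ℝ) (S : ℝ) : ℕ → ℝ × ℝ × ℝ
  | 0 => (0, 0, s 0)
  | k + 1 =>
    let p := shelf s S k
    if p.1 + s k + s (k + 1) ≤ S then (p.1 + s k, p.2.1, p.2.2)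
    else (0, p.2.1 + p.2.2, s (k + 1))

section
variable (s : ℕ → ℝ) (S : ℝ)

lemma shelf_succ (k : ℕ) :
    shelf s S (k + 1) =
      if (shelf s S k).1 + s k + s (k + 1) ≤ S then
        ((shelf s S k).1 + s k, (shelf s S k).2.1, (shelf s S k).2.2)
      else (0, (shelf s S k).2.1 + (shelf s S k).2.2, s (k + 1)) := by
  rw [shelf]

variable {s S} (hmono : ∀ k, s (k + 1) ≤ s k) (hpos : ∀ k, 0 < s k)

include hmono in
lemma s_anti : ∀ {j k : ℕ}, j ≤ k → s k ≤ s j := by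
  intro j k h
  exact (antitone_nat_of_succ_le hmono) h

include hmono in
lemma shelf_h_le (k : ℕ) : s k ≤ (shelf s S k).2.2 ∧ (shelf s S k).2.2 ≤ s 0 := by
  induction k with
  | zero => exact ⟨le_refl _, le_refl _⟩
  | succ k ih =>
    rw [shelf_succ]
    split
    · exact ⟨(hmono k).trans ih.1, ih.2⟩
    · exact ⟨le_refl _, s_anti hmono (Nat.zero_le _)⟩

include hmono hpos in
lemma shelf_nonneg (k : ℕ) : 0 ≤ (shelf s S k).1 ∧ 0 ≤ (shelf s S k).2.1 := by
  induction k with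
  | zero => exact ⟨le_refl _, le_refl _⟩
  | succ k ih =>
    rw [shelf_succ]
    split
    · dsimp only
      exact ⟨by nlinarith [hpos k], ih.2⟩
    · refine ⟨le_refl _, ?_⟩
      have := (shelf_h_le hmono (S := S) k).1
      have := hpos k
      dsimp only
      linarith [ih.2]

include hmono hpos in
lemma shelf_x_le (hS : s 0 ≤ S) (k : ℕ) : (shelf s S k).1 + s k ≤ S := by
  induction k with
  | zero => simpa [shelf] using hS
  | succ k ih =>
    rw [shelf_succ]
    split
    · next h => simpa [add_assoc] using h
    · simpa using (s_anti hmono (Nat.zero_le (k+1))).trans hS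

include hmono hpos in
lemma shelf_Q (hS : s 0 ≤ S) (k : ℕ) :
    (S - s 0) * ((shelf s S k).2.1 + (shelf s S k).2.2) ≤
      (S - s 0) * s 0 + (∑ j ∈ Finset.range k, s j ^ 2) - s k * (shelf s S k).1 := by
  induction k with
  | zero => simp [shelf]
  | succ k ih =>
    rw [shelf_succ]
    rw [Finset.sum_range_succ]
    split
    · next h =>
      have h1 : s (k+1) ≤ s k := hmono k
      have h2 : 0 ≤ (shelf s S k).1 := (shelf_nonneg hmono hpos k).1
      dsimp only
      nlinarith [hpos k]
    · next h =>
      push_neg at h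
      have h1 : s (k+1) ≤ s k := hmono k
      have h2 : s (k+1) ≤ s 0 := s_anti hmono (Nat.zero_le _)
      have h3 : S - s (k+1) < (shelf s S k).1 + s k := by linarith
      dsimp only
      nlinarith [hpos (k+1), hpos k, (shelf_nonneg hmono hpos (S := S) k).1]

include hmono hpos in
lemma shelf_y_le {θ A : ℝ} (hθ0 : 0 < θ) (hθ1 : θ < 1) (hS : 0 < S)
    (h0 : s 0 ≤ (1 - θ) * S)
    (hA : ∀ m, ∑ j ∈ Finset.range m, s j ^ 2 ≤ A) (hA2 : A ≤ θ ^ 2 * S ^ 2)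
    (k : ℕ) : (shelf s S k).2.1 + (shelf s S k).2.2 ≤ S := by
  have hs0S : s 0 ≤ S := h0.trans (by nlinarith)
  have hQ := shelf_Q hmono hpos hs0S k
  have hAk := hA k
  have hx := (shelf_nonneg hmono hpos (S := S) k).1
  have hsk := hpos k
  have hgap : θ * S ≤ S - s 0 := by nlinarith
  have hgap0 : 0 < S - s 0 := by nlinarith
  have h1 : (S - s 0) * ((shelf s S k).2.1 + (shelf s S k).2.2) ≤ (S - s 0) * s 0 + A := by
    nlinarith
  have h3 : (θ * S) * (θ * S) ≤ (S - s 0) * (S - s 0) :=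
    mul_le_mul hgap hgap (by positivity) hgap0.le
  have h2 : (S - s 0) * s 0 + A ≤ (S - s 0) * S := by nlinarith
  nlinarith

include hmono hpos in
lemma shelf_order : ∀ {m k : ℕ}, m < k →
    (shelf s S m).2.1 + (shelf s S m).2.2 ≤ (shelf s S k).2.1 ∨
    ((shelf s S k).2.1 = (shelf s S m).2.1 ∧ (shelf s S k).2.2 = (shelf s S m).2.2 ∧
      (shelf s S m).1 + s m ≤ (shelf s S k).1) := by
  intro m k hmk
  induction k with
  | zero => omega
  | succ k ih =>
    rcases Nat.lt_succ_iff_lt_or_eq.1 hmk with h | rfl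
    · rcases ih h with hc | ⟨hy, hh, hx⟩
      · rw [shelf_succ]
        split
        · exact Or.inl hc
        · left
          dsimp only
          have := (shelf_h_le hmono (S := S) k).1
          have := hpos k
          linarith
      · rw [shelf_succ]
        split
        · right
          refine ⟨hy, hh, ?_⟩
          dsimp only
          linarith [hpos k]
        · left
          dsimp only
          rw [hy, hh]
    · rw [shelf_succ]
      split
      · right
        exact ⟨rfl, rfl, le_refl _⟩
      · left
        dsimp only
        have := (shelf_h_le hmono (S := S) m).1
        linarith

end

/-! ### Auxiliary: twin prime counting -/

instance : DecidablePred IsTwinPrime := fun n => by unfold IsTwinPrime; infer_instance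

lemma counting_eq_count (x : ℝ) (hx : 0 ≤ x) :
    twinPrimeCounting x = Nat.count IsTwinPrime (⌊x⌋₊ + 1) := by
  have hset : {p : ℕ | IsTwinPrime p ∧ (p : ℝ) ≤ x} =
      ↑((Finset.range (⌊x⌋₊ + 1)).filter IsTwinPrime) := by
    ext p
    simp only [Set.mem_setOf_eq, Finset.coe_filter, Finset.mem_range, Nat.lt_succ_iff,
      Set.mem_setOf_eq]
    rw [Nat.le_floor_iff hx]
    tauto
  rw [twinPrimeCounting, hset, Set.ncard_coe_finset, Nat.count_eq_card_filter_range]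

lemma tp3 : IsTwinPrime 3 := ⟨by norm_num, Or.inr (by norm_num)⟩

lemma counting_pos (x : ℝ) (hx : 3 ≤ x) : 1 ≤ twinPrimeCounting x := by
  rw [counting_eq_count x (by linarith)]
  have h3 : 3 ≤ ⌊x⌋₊ := Nat.le_floor (by exact_mod_cast hx)
  rw [Nat.count_eq_card_filter_range]
  refine Finset.card_pos.mpr ⟨3, ?_⟩
  simp only [Finset.mem_filter, Finset.mem_range]
  exact ⟨by omega, tp3⟩

lemma counting_nth (hinf : {p : ℕ | IsTwinPrime p}.Infinite) (n : ℕ) :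
    twinPrimeCounting ((Nat.nth IsTwinPrime n : ℕ) : ℝ) = n + 1 := by
  rw [counting_eq_count _ (by positivity), Nat.floor_natCast, Nat.count_succ,
    Nat.count_nth_of_infinite hinf, if_pos (Nat.nth_mem_of_infinite hinf n)]

lemma one_le_log_of_three_le {x : ℝ} (hx : 3 ≤ x) : 1 ≤ Real.log x := by
  have he : Real.exp 1 ≤ 3 := by
    have := Real.exp_one_lt_d9; linarith
  calc (1:ℝ) = Real.log (Real.exp 1) := (Real.log_exp 1).symm
    _ ≤ Real.log x := Real.log_le_log (Real.exp_pos 1) (he.trans hx)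

open Filter Real in
lemma eventual_lower (hinf : {p : ℕ | IsTwinPrime p}.Infinite)
    (c x₁ K K'' : ℝ) (hc : 0 < c) (hx₁ : 2 ≤ x₁) (hK : 0 < K) (hKK : K < K'')
    (hbound' : ∀ x : ℝ, x₁ ≤ x → (twinPrimeCounting x : ℝ) ≤
      K * x / Real.log x ^ 2 * (1 + c * Real.log (Real.log x) / Real.log x)) :
    ∀ᶠ n : ℕ in atTop, (n : ℝ) * Real.log n ^ 2 ≤ K'' * (nthTwinPrime n : ℝ) := by
  set δ : ℝ := min 1 ((K'' - K) / (7 * K)) with hδdef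
  have hδ0 : 0 < δ := lt_min one_pos (div_pos (by linarith) (by positivity))
  have hδ1 : δ ≤ 1 := min_le_left _ _
  have hδK : K * (1 + δ) ^ 3 ≤ K'' := by
    have h7 : δ ≤ (K'' - K) / (7 * K) := min_le_right _ _
    have h7' : δ * (7 * K) ≤ K'' - K := (le_div_iff₀ (by positivity)).1 h7
    have hδ2 : δ ^ 2 ≤ δ := by nlinarith
    have hδ3 : δ ^ 3 ≤ δ := by nlinarith
    nlinarith [hK.le]
  have hq : Tendsto (fun n : ℕ => ((nthTwinPrime n : ℕ) : ℝ)) atTop atTop := by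
    apply tendsto_natCast_atTop_atTop.comp
    apply tendsto_atTop_atTop.2
    intro b
    refine ⟨b + 1, fun n hn => ?_⟩
    have h1 : b ≤ n - 1 := by omega
    calc b ≤ n - 1 := h1
      _ ≤ Nat.nth IsTwinPrime (n - 1) := Nat.le_nth fun hf => absurd hf hinf
  have hloglog : Tendsto (fun x : ℝ => c * Real.log (Real.log x) / Real.log x) atTop (nhds 0) := by
    have h1 : Tendsto (fun y : ℝ => Real.log y / (1 * y + 0)) atTop (nhds 0) := by
      simpa using Real.tendsto_pow_log_div_mul_add_atTop 1 0 1 one_ne_zero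
    have h2 := (h1.comp Real.tendsto_log_atTop).const_mul c
    simp only [mul_zero] at h2
    refine h2.congr fun x => ?_
    simp [mul_div_assoc]
  have hev : ∀ᶠ x : ℝ in atTop, x₁ ≤ x ∧ 1 ≤ Real.log x ∧
      c * Real.log (Real.log x) / Real.log x ≤ δ ∧ Real.log (2 * K) ≤ δ * Real.log x := by
    have e1 : ∀ᶠ x : ℝ in atTop, x₁ ≤ x := eventually_ge_atTop x₁
    have e2 : ∀ᶠ x : ℝ in atTop, 1 ≤ Real.log x := Real.tendsto_log_atTop.eventually_ge_atTop 1
    have e3 : ∀ᶠ x : ℝ in atTop, c * Real.log (Real.log x) / Real.log x ≤ δ :=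
      hloglog.eventually (eventually_le_nhds hδ0)
    have e4 : ∀ᶠ x : ℝ in atTop, Real.log (2 * K) / δ ≤ Real.log x :=
      Real.tendsto_log_atTop.eventually_ge_atTop _
    filter_upwards [e1, e2, e3, e4] with x h1 h2 h3 h4
    exact ⟨h1, h2, h3, by rw [div_le_iff₀ hδ0] at h4; linarith [h4]⟩
  have hevn := hq.eventually hev
  filter_upwards [hevn, eventually_ge_atTop 3] with n hx hn3
  set x : ℝ := ((nthTwinPrime n : ℕ) : ℝ) with hxdef
  obtain ⟨hxx₁, hℓ1, hδsmall, hlog2K⟩ := hx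
  set ℓ : ℝ := Real.log x with hℓdef
  have hℓ0 : 0 < ℓ := by linarith
  have hx0 : 0 < x := by
    have := hxx₁; linarith
  have hcount : (twinPrimeCounting x : ℝ) = n := by
    have h := counting_nth hinf (n - 1)
    have hn : n - 1 + 1 = n := by omega
    rw [hn] at h
    have h2 : twinPrimeCounting x = n := by
      rw [hxdef]; exact h
    exact_mod_cast h2
  have hb := hbound' x hxx₁
  rw [hcount] at hb
  have h1 : (n : ℝ) * ℓ ^ 2 ≤ K * x * (1 + δ) := by
    have hstep : K * x / ℓ ^ 2 * (1 + c * Real.log ℓ / ℓ) ≤ K * x / ℓ ^ 2 * (1 + δ) := by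
      apply mul_le_mul_of_nonneg_left _ (by positivity)
      linarith
    have := hb.trans hstep
    calc (n : ℝ) * ℓ ^ 2 ≤ (K * x / ℓ ^ 2 * (1 + δ)) * ℓ ^ 2 := by
          apply mul_le_mul_of_nonneg_right this (by positivity)
      _ = K * x * (1 + δ) := by field_simp
  have hn0 : (0:ℝ) < (n:ℝ) := by exact_mod_cast (by omega : 0 < n)
  have h2 : (n : ℝ) ≤ 2 * K * x := by
    have hℓsq : (1:ℝ) ≤ ℓ ^ 2 := by nlinarith
    nlinarith
  have h3 : Real.log n ≤ (1 + δ) * ℓ := by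
    have := Real.log_le_log hn0 h2
    rw [Real.log_mul (by positivity) (ne_of_gt hx0)] at this
    linarith
  have h4 : 0 ≤ Real.log n := Real.log_nonneg (by exact_mod_cast (by omega : 1 ≤ n))
  have h5 : Real.log n ^ 2 ≤ (1 + δ) ^ 2 * ℓ ^ 2 := by nlinarith
  calc (n : ℝ) * Real.log n ^ 2 ≤ (n : ℝ) * ((1 + δ) ^ 2 * ℓ ^ 2) := by
        apply mul_le_mul_of_nonneg_left h5 hn0.le
    _ = (1 + δ) ^ 2 * ((n : ℝ) * ℓ ^ 2) := by ring
    _ ≤ (1 + δ) ^ 2 * (K * x * (1 + δ)) := by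
        apply mul_le_mul_of_nonneg_left h1 (by positivity)
    _ = (K * (1 + δ) ^ 3) * x := by ring
    _ ≤ K'' * x := mul_le_mul_of_nonneg_right hδK hx0.le

lemma rpow_two_mul (x u : ℝ) (hx : 0 ≤ x) : (x ^ u) ^ 2 = x ^ (2 * u) := by
  rw [← Real.rpow_natCast (x ^ u) 2, ← Real.rpow_mul hx]
  norm_num [mul_comm]

set_option maxHeartbeats 1600000 in
theorem packing_TP_harmonic
    (hinf : {p : ℕ | IsTwinPrime p}.Infinite)
    (C c x₁ : ℝ) (hC : 0 < C) (hc : 0 < c) (hx₁ : 2 ≤ x₁)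
    (hbound : ∀ x : ℝ, x₁ ≤ x →
      (twinPrimeCounting x : ℝ) ≤
        C * twinPrimeConstant * x / Real.log x ^ 2 *
          (1 + c * Real.log (Real.log x) / Real.log x))
    (t : ℝ) (ht₁ : 1 / 2 < t) (ht₂ : t < 1)
    (C' : ℝ) (hC' : C < C') :
    ∃ N₀ : ℕ, 0 < N₀ ∧ ∀ n₀ : ℕ, N₀ ≤ n₀ →
      ∃ (ctr : ℝ × ℝ) (pos : {n : ℕ // n₀ ≤ n} → ℝ × ℝ),
        -- the squares are packed (contained, pairwise disjoint interiors) into a square of area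
        -- (C'·Π₂)^{2t} · ∑_{n=n₀}^∞ (n (log n)²)^{-2t}
        (∀ n : {n : ℕ // n₀ ≤ n},
          square (pos n) ((nthTwinPrime (n : ℕ) : ℝ) ^ (-t)) ⊆
            square ctr
              (Real.sqrt ((C' * twinPrimeConstant) ^ (2 * t) *
                ∑' n : {n : ℕ // n₀ ≤ n},
                  ((((n : ℕ) : ℝ) * Real.log (((n : ℕ) : ℝ)) ^ 2) ^ (-(2 * t)))))) ∧
        Pairwise fun n n' : {n : ℕ // n₀ ≤ n} =>
          Disjoint (interior (square (pos n) ((nthTwinPrime (n : ℕ) : ℝ) ^ (-t))))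
            (interior (square (pos n') ((nthTwinPrime (n' : ℕ) : ℝ) ^ (-t)))) := by
  classical
  have ht0 : 0 < t := by linarith
  -- the twin prime constant is positive
  have hPP : 0 < twinPrimeConstant := by
    by_contra hneg
    push_neg at hneg
    set x : ℝ := max x₁ 3 with hxdef
    have hx3 : (3:ℝ) ≤ x := le_max_right _ _
    have hb := hbound x (le_max_left _ _)
    have h1 : 1 ≤ (twinPrimeCounting x : ℝ) := by exact_mod_cast counting_pos x hx3
    have hlog : 1 ≤ Real.log x := one_le_log_of_three_le hx3
    have hll : 0 ≤ Real.log (Real.log x) := Real.log_nonneg hlog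
    have hfac : 0 < 1 + c * Real.log (Real.log x) / Real.log x := by positivity
    have hxpos : 0 < x := by linarith
    have hCP : C * twinPrimeConstant ≤ 0 := mul_nonpos_of_nonneg_of_nonpos hC.le hneg
    have hrhs : C * twinPrimeConstant * x / Real.log x ^ 2 *
        (1 + c * Real.log (Real.log x) / Real.log x) ≤ 0 := by
      apply mul_nonpos_of_nonpos_of_nonneg _ hfac.le
      apply div_nonpos_of_nonpos_of_nonneg _ (by positivity)
      exact mul_nonpos_of_nonpos_of_nonneg hCP hxpos.le
    linarith
  set PP : ℝ := twinPrimeConstant with hPPdef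
  set C'' : ℝ := (C + C') / 2 with hC''def
  have hCC'' : C < C'' := by rw [hC''def]; linarith
  have hC''C' : C'' < C' := by rw [hC''def]; linarith
  have hC''0 : 0 < C'' := by linarith
  have hC'0 : 0 < C' := by linarith
  have hK''0 : 0 < C'' * PP := by positivity
  have hK'0 : 0 < C' * PP := by positivity
  -- eventual lower bound on twin primes
  have hE := eventual_lower hinf c x₁ (C * PP) (C'' * PP) hc hx₁ (by positivity)
    (by nlinarith) hbound
  obtain ⟨N₁, hN₁⟩ := Filter.eventually_atTop.1 hE
  -- the slack factor θ
  set θ : ℝ := (C'' / C') ^ t with hθdef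
  have hθ0 : 0 < θ := Real.rpow_pos_of_pos (by positivity) t
  have hθ1 : θ < 1 := Real.rpow_lt_one (by positivity) ((div_lt_one hC'0).2 hC''C') ht0
  set E8 : ℝ := (8:ℝ) ^ t with hE8def
  have hE80 : 0 < E8 := Real.rpow_pos_of_pos (by norm_num) t
  set M : ℕ := ⌈(θ * E8 / (1 - θ)) ^ 2⌉₊ + 1 with hMdef
  refine ⟨max (max N₁ 3) M, by omega, fun n₀ hn₀ => ?_⟩
  have hn₀3 : 3 ≤ n₀ := le_trans (le_max_of_le_left (le_max_right N₁ 3)) hn₀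
  have hn₀N₁ : N₁ ≤ n₀ := le_trans (le_max_of_le_left (le_max_left N₁ 3)) hn₀
  have hn₀M : M ≤ n₀ := le_trans (le_max_right _ _) hn₀
  -- basic facts about the comparison sequence
  have hbase : ∀ n : ℕ, 3 ≤ n → 1 ≤ Real.log n ∧ 0 < (n:ℝ) * Real.log n ^ 2 := by
    intro n hn
    have h3 : (3:ℝ) ≤ (n:ℝ) := by exact_mod_cast hn
    have hl := one_le_log_of_three_le h3
    exact ⟨hl, by nlinarith⟩
  set Kt : ℝ := (C' * PP) ^ t with hKtdef
  have hKt0 : 0 < Kt := Real.rpow_pos_of_pos hK'0 t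
  set btil : ℕ → ℝ := fun n => ((n:ℝ) * Real.log n ^ 2) ^ (-t) with hbtildef
  have hbtil0 : ∀ n : ℕ, 3 ≤ n → 0 < btil n := fun n hn =>
    Real.rpow_pos_of_pos (hbase n hn).2 _
  -- eventual side-length bound
  have hside : ∀ n : ℕ, N₁ ≤ n → 3 ≤ n →
      ((nthTwinPrime n : ℕ) : ℝ) ^ (-t) ≤ θ * (Kt * btil n) := by
    intro n hnN hn3
    have hq2 : 2 ≤ nthTwinPrime n := (Nat.nth_mem_of_infinite hinf (n-1)).1.two_le
    have hq0 : (0:ℝ) < ((nthTwinPrime n : ℕ) : ℝ) := by exact_mod_cast (by omega : 0 < nthTwinPrime n)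
    have hlow := hN₁ n hnN
    have hu0 : 0 < (n:ℝ) * Real.log n ^ 2 := (hbase n hn3).2
    have hdivle : ((n:ℝ) * Real.log n ^ 2) / (C'' * PP) ≤ ((nthTwinPrime n : ℕ) : ℝ) := by
      rw [div_le_iff₀ hK''0]
      linarith [hlow]
    have h1 : ((nthTwinPrime n : ℕ) : ℝ) ^ (-t) ≤
        (((n:ℝ) * Real.log n ^ 2) / (C'' * PP)) ^ (-t) :=
      Real.rpow_le_rpow_of_nonpos (by positivity) hdivle (by linarith)
    have h2 : (((n:ℝ) * Real.log n ^ 2) / (C'' * PP)) ^ (-t) =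
        (C'' * PP) ^ t * btil n := by
      rw [Real.div_rpow hu0.le hK''0.le, Real.rpow_neg hK''0.le, div_eq_mul_inv, inv_inv]
      ring
    have h3 : θ * Kt = (C'' * PP) ^ t := by
      rw [hθdef, hKtdef, ← Real.mul_rpow (by positivity) hK'0.le]
      congr 1
      field_simp
    calc ((nthTwinPrime n : ℕ) : ℝ) ^ (-t) ≤ (C'' * PP) ^ t * btil n := h1.trans_eq h2
      _ = θ * (Kt * btil n) := by rw [← mul_assoc, h3]
  -- the sequence of square side lengths
  set sq : ℕ → ℝ := fun k => ((nthTwinPrime (n₀ + k) : ℕ) : ℝ) ^ (-t) with hsqdef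
  have hsqpos : ∀ k, 0 < sq k := by
    intro k
    have hq2 : 2 ≤ nthTwinPrime (n₀ + k) := (Nat.nth_mem_of_infinite hinf _).1.two_le
    exact Real.rpow_pos_of_pos (by exact_mod_cast (by omega : 0 < nthTwinPrime (n₀+k))) _
  have hsqmono : ∀ k, sq (k + 1) ≤ sq k := by
    intro k
    have hlt : Nat.nth IsTwinPrime (n₀ + k - 1) < Nat.nth IsTwinPrime (n₀ + (k+1) - 1) :=
      (Nat.nth_lt_nth hinf).2 (by omega)
    have hq2 : 2 ≤ nthTwinPrime (n₀ + k) := (Nat.nth_mem_of_infinite hinf _).1.two_le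
    apply Real.rpow_le_rpow_of_nonpos
      (by exact_mod_cast (by omega : 0 < nthTwinPrime (n₀+k)))
      (by exact_mod_cast hlt.le) (by linarith)
  have hsqb : ∀ k, sq k ≤ θ * (Kt * btil (n₀ + k)) := fun k =>
    hside (n₀ + k) (by omega) (by omega)
  -- summability
  set g : ℕ → ℝ := fun k => (((n₀ + k : ℕ) : ℝ) * Real.log ((n₀ + k : ℕ) : ℝ) ^ 2) ^ (-(2*t))
    with hgdef
  have hgnonneg : ∀ k, 0 ≤ g k := fun k => Real.rpow_nonneg (by positivity) _
  have hg_eq : ∀ k, g k = btil (n₀ + k) ^ 2 := by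
    intro k
    rw [hbtildef]
    dsimp only
    rw [rpow_two_mul _ (-t) (by positivity), hgdef]
    norm_num
  have hsum : Summable g := by
    have hbase' : Summable (fun n : ℕ => (n:ℝ) ^ (-(2*t))) :=
      Real.summable_nat_rpow.2 (by linarith)
    have hshift : Summable (fun k : ℕ => ((n₀ + k : ℕ) : ℝ) ^ (-(2*t))) :=
      hbase'.comp_injective (fun a b h => by omega)
    apply Summable.of_nonneg_of_le hgnonneg _ hshift
    intro k
    have hk3 : 3 ≤ n₀ + k := by omega
    have ⟨hl, hp⟩ := hbase (n₀ + k) hk3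
    apply Real.rpow_le_rpow_of_nonpos (by exact_mod_cast (by omega : 0 < n₀ + k)) _ (by linarith)
    have hpos' : (0:ℝ) < ((n₀ + k : ℕ) : ℝ) := by exact_mod_cast (by omega : 0 < n₀ + k)
    have hsq1 : (1:ℝ) ≤ Real.log ((n₀ + k : ℕ) : ℝ) ^ 2 := by nlinarith [hl]
    have := mul_le_mul_of_nonneg_left hsq1 hpos'.le
    linarith
  -- reindexing the tsum
  set e : ℕ ≃ {n : ℕ // n₀ ≤ n} :=
    { toFun := fun k => ⟨n₀ + k, Nat.le_add_right _ _⟩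
      invFun := fun n => n.1 - n₀
      left_inv := fun k => by simp
      right_inv := fun n => Subtype.ext (Nat.add_sub_cancel' n.2) } with hedef
  set Tar : ℝ := (C' * PP) ^ (2 * t) *
      ∑' n : {n : ℕ // n₀ ≤ n}, ((((n : ℕ) : ℝ) * Real.log (((n : ℕ) : ℝ)) ^ 2) ^ (-(2 * t)))
    with hTardef
  have htsum : (∑' n : {n : ℕ // n₀ ≤ n},
      ((((n : ℕ) : ℝ) * Real.log (((n : ℕ) : ℝ)) ^ 2) ^ (-(2 * t)))) = ∑' k, g k :=
    (e.tsum_eq _).symm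
  have hTar_eq : Tar = Kt ^ 2 * ∑' k, g k := by
    rw [hTardef, htsum, hKtdef, rpow_two_mul _ t hK'0.le]
  have htsum_pos : 0 < ∑' k, g k := by
    have h0 : 0 < g 0 := by
      rw [hg_eq]
      exact pow_pos (hbtil0 _ (by omega)) 2
    have := Summable.le_tsum hsum 0 (fun i _ => hgnonneg i)
    linarith
  have hTpos : 0 < Tar := by
    rw [hTar_eq]; positivity
  set Sside : ℝ := Real.sqrt Tar with hSdef
  have hSpos : 0 < Sside := Real.sqrt_pos.2 hTpos
  have hSsq : Sside ^ 2 = Tar := Real.sq_sqrt hTpos.le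
  -- partial sums of areas
  set A : ℝ := θ ^ 2 * Tar with hAdef
  have hApartial : ∀ m, ∑ j ∈ Finset.range m, sq j ^ 2 ≤ A := by
    intro m
    have hterm : ∀ j, sq j ^ 2 ≤ θ ^ 2 * Kt ^ 2 * g j := by
      intro j
      have h1 : sq j ^ 2 ≤ (θ * (Kt * btil (n₀ + j))) ^ 2 :=
        pow_le_pow_left₀ (hsqpos j).le (hsqb j) 2
      rw [hg_eq]
      nlinarith [h1]
    calc ∑ j ∈ Finset.range m, sq j ^ 2 ≤ ∑ j ∈ Finset.range m, θ ^ 2 * Kt ^ 2 * g j :=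
          Finset.sum_le_sum fun j _ => hterm j
      _ = θ ^ 2 * Kt ^ 2 * ∑ j ∈ Finset.range m, g j := by rw [Finset.mul_sum]
      _ ≤ θ ^ 2 * Kt ^ 2 * ∑' k, g k := by
          apply mul_le_mul_of_nonneg_left _ (by positivity)
          exact Summable.sum_le_tsum _ (fun i _ => hgnonneg i) hsum
      _ = A := by rw [hAdef, hTar_eq]; ring
  have hA2 : A ≤ θ ^ 2 * Sside ^ 2 := by rw [hSsq]
  -- the crucial smallness of the first square
  have h0 : sq 0 ≤ (1 - θ) * Sside := by
    -- lower bound for the tail sum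
    have h8 : ∀ k, k < n₀ → E8⁻¹ * btil n₀ ≤ btil (n₀ + k) := by
      intro k hk
      have hk3 : 3 ≤ n₀ + k := by omega
      have ⟨hl, hp⟩ := hbase (n₀ + k) hk3
      have ⟨hl0, hp0⟩ := hbase n₀ hn₀3
      have hcast : ((n₀ + k : ℕ) : ℝ) ≤ 2 * (n₀ : ℝ) := by
        push_cast; have : (k:ℝ) ≤ (n₀:ℝ) := by exact_mod_cast hk.le
        linarith
      have hlog2 : Real.log ((n₀ + k : ℕ) : ℝ) ≤ 2 * Real.log n₀ := by
        have h2n : ((n₀ + k : ℕ) : ℝ) ≤ (n₀:ℝ) * (n₀:ℝ) := by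
          have h3 : (3:ℝ) ≤ (n₀:ℝ) := by exact_mod_cast hn₀3
          nlinarith
        calc Real.log ((n₀ + k : ℕ) : ℝ) ≤ Real.log ((n₀:ℝ) * (n₀:ℝ)) :=
              Real.log_le_log (by exact_mod_cast (by omega : 0 < n₀ + k)) h2n
          _ = 2 * Real.log n₀ := by
              rw [Real.log_mul (by positivity) (by positivity)]; ring
      have hbb : ((n₀ + k : ℕ) : ℝ) * Real.log ((n₀ + k : ℕ) : ℝ) ^ 2 ≤
          8 * ((n₀:ℝ) * Real.log (n₀:ℝ) ^ 2) := by
        have hlpos : 0 ≤ Real.log ((n₀ + k : ℕ) : ℝ) := by linarith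
        have hpos' : (0:ℝ) ≤ ((n₀ + k : ℕ) : ℝ) := by positivity
        have hL2 : Real.log ((n₀ + k : ℕ) : ℝ) ^ 2 ≤ 4 * Real.log (n₀:ℝ) ^ 2 := by
          nlinarith [hlog2, hlpos, hl0]
        calc ((n₀ + k : ℕ) : ℝ) * Real.log ((n₀ + k : ℕ) : ℝ) ^ 2
            ≤ ((n₀ + k : ℕ) : ℝ) * (4 * Real.log (n₀:ℝ) ^ 2) :=
              mul_le_mul_of_nonneg_left hL2 hpos'
          _ ≤ (2 * (n₀ : ℝ)) * (4 * Real.log (n₀:ℝ) ^ 2) := by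
              have h4 : (0:ℝ) ≤ 4 * Real.log (n₀:ℝ) ^ 2 := by positivity
              exact mul_le_mul_of_nonneg_right hcast h4
          _ = 8 * ((n₀:ℝ) * Real.log (n₀:ℝ) ^ 2) := by ring
      have h1 : btil (n₀ + k) ≥ (8 * ((n₀:ℝ) * Real.log (n₀:ℝ) ^ 2)) ^ (-t) :=
        Real.rpow_le_rpow_of_nonpos hp hbb (by linarith)
      have h2 : (8 * ((n₀:ℝ) * Real.log (n₀:ℝ) ^ 2)) ^ (-t) = E8⁻¹ * btil n₀ := by
        rw [Real.mul_rpow (by norm_num) hp0.le]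
        congr 1
        rw [hE8def, ← Real.rpow_neg (by norm_num : (0:ℝ) ≤ 8)]
      linarith [h1, h2.symm.le]
    have hlower : (n₀ : ℝ) * (E8⁻¹ * btil n₀) ^ 2 ≤ ∑' k, g k := by
      have hsumlow : (n₀ : ℝ) * (E8⁻¹ * btil n₀) ^ 2 ≤ ∑ k ∈ Finset.range n₀, g k := by
        have : ∀ k ∈ Finset.range n₀, (E8⁻¹ * btil n₀) ^ 2 ≤ g k := by
          intro k hk
          rw [hg_eq]
          have hle := h8 k (Finset.mem_range.1 hk)
          have hb0 : 0 < btil n₀ := hbtil0 n₀ hn₀3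
          have hnn : 0 ≤ E8⁻¹ * btil n₀ := mul_nonneg (inv_nonneg.2 hE80.le) hb0.le
          exact pow_le_pow_left₀ hnn hle 2
        calc (n₀ : ℝ) * (E8⁻¹ * btil n₀) ^ 2
            = ∑ _k ∈ Finset.range n₀, (E8⁻¹ * btil n₀) ^ 2 := by
              rw [Finset.sum_const, Finset.card_range]; ring
          _ ≤ ∑ k ∈ Finset.range n₀, g k := Finset.sum_le_sum this
      exact hsumlow.trans (Summable.sum_le_tsum _ (fun i _ => hgnonneg i) hsum)
    -- numeric condition from n₀ ≥ M
    have hn₀big : (θ * E8 / (1 - θ)) ^ 2 ≤ (n₀ : ℝ) := by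
      have h1 : (θ * E8 / (1 - θ)) ^ 2 ≤ (⌈(θ * E8 / (1 - θ)) ^ 2⌉₊ : ℝ) := Nat.le_ceil _
      have h2 : (M : ℝ) ≤ (n₀ : ℝ) := by exact_mod_cast hn₀M
      have h3 : (⌈(θ * E8 / (1 - θ)) ^ 2⌉₊ : ℝ) ≤ (M:ℝ) := by
        rw [hMdef]; push_cast; linarith
      linarith
    -- compare squares
    have hb0 : 0 < btil n₀ := hbtil0 n₀ hn₀3
    have hR2 : (θ * (Kt * btil n₀)) ^ 2 ≤ ((1 - θ) * Sside) ^ 2 := by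
      have hS2 : ((1 - θ) * Sside) ^ 2 = (1 - θ)^2 * Tar := by
        rw [mul_pow, hSsq]
      rw [hS2, hTar_eq]
      have hstep : (1 - θ)^2 * (Kt^2 * ((n₀ : ℝ) * (E8⁻¹ * btil n₀) ^ 2)) ≤
          (1 - θ)^2 * (Kt^2 * ∑' k, g k) := by
        apply mul_le_mul_of_nonneg_left _ (by positivity)
        exact mul_le_mul_of_nonneg_left hlower (by positivity)
      refine le_trans ?_ hstep
      -- θ² Kt² b² ≤ (1-θ)² Kt² n₀ E8⁻² b²
      have hkey : θ^2 * E8^2 ≤ (1 - θ)^2 * (n₀:ℝ) := by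
        have hne : (1 - θ) ≠ 0 := by intro h; nlinarith
        have := hn₀big
        rw [div_pow, div_le_iff₀ (by positivity)] at this
        calc θ^2 * E8^2 = (θ * E8)^2 := by ring
          _ ≤ (n₀:ℝ) * (1-θ)^2 := this
          _ = (1 - θ)^2 * (n₀:ℝ) := by ring
      have hcoef : θ^2 ≤ (1 - θ)^2 * (n₀:ℝ) * (E8⁻¹)^2 := by
        have h1 := mul_le_mul_of_nonneg_right hkey (sq_nonneg E8⁻¹)
        have hE8inv : E8^2 * (E8⁻¹)^2 = 1 := by field_simp
        calc θ^2 = θ^2 * (E8^2 * (E8⁻¹)^2) := by rw [hE8inv]; ring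
          _ = θ^2 * E8^2 * (E8⁻¹)^2 := by ring
          _ ≤ (1-θ)^2 * (n₀:ℝ) * (E8⁻¹)^2 := by linarith [h1]
      calc (θ * (Kt * btil n₀))^2 = θ^2 * (Kt * btil n₀)^2 := by ring
        _ ≤ ((1 - θ)^2 * (n₀:ℝ) * (E8⁻¹)^2) * (Kt * btil n₀)^2 :=
            mul_le_mul_of_nonneg_right hcoef (sq_nonneg _)
        _ = (1 - θ)^2 * (Kt^2 * ((n₀ : ℝ) * (E8⁻¹ * btil n₀) ^ 2)) := by ring
    have hR : θ * (Kt * btil n₀) ≤ (1 - θ) * Sside := by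
      have h1 : 0 ≤ θ * (Kt * btil n₀) := by positivity
      have h2 : 0 ≤ (1 - θ) * Sside := by nlinarith [hSpos.le, hθ1]
      have h3 := Real.sqrt_le_sqrt hR2
      rwa [Real.sqrt_sq h1, Real.sqrt_sq h2] at h3
    exact (hsqb 0).trans (by simpa using hR)
  have hs0S : sq 0 ≤ Sside := h0.trans (by nlinarith [hSpos.le])
  -- assemble the packing
  refine ⟨(0, 0), fun n => ((shelf sq Sside (n.1 - n₀)).1, (shelf sq Sside (n.1 - n₀)).2.1),
    ?_, ?_⟩
  · -- containment
    intro n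
    have hk : n₀ + (n.1 - n₀) = n.1 := Nat.add_sub_cancel' n.2
    set k := n.1 - n₀ with hkdef
    have hside_eq : ((nthTwinPrime (n : ℕ) : ℕ) : ℝ) ^ (-t) = sq k := by
      rw [hsqdef]; dsimp only; rw [hk]
    rw [hside_eq]
    show square _ (sq k) ⊆ square ((0:ℝ), (0:ℝ)) Sside
    rw [square, square]
    dsimp only
    have hxx := (shelf_nonneg hsqmono hsqpos (S := Sside) k)
    have hxS := shelf_x_le hsqmono hsqpos hs0S k
    have hyS : (shelf sq Sside k).2.1 + sq k ≤ Sside := by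
      have h1 := (shelf_h_le hsqmono (S := Sside) k).1
      have h2 := shelf_y_le hsqmono hsqpos hθ0 hθ1 hSpos h0 hApartial hA2 k
      linarith
    apply Set.prod_mono
    · exact Set.Icc_subset_Icc hxx.1 (by rw [zero_add]; exact hxS)
    · exact Set.Icc_subset_Icc hxx.2 (by rw [zero_add]; exact hyS)
  · -- disjointness
    have key : ∀ m n : {n : ℕ // n₀ ≤ n}, m.1 < n.1 →
        Disjoint (interior (square ((shelf sq Sside (m.1 - n₀)).1, (shelf sq Sside (m.1 - n₀)).2.1)
            ((nthTwinPrime (m : ℕ) : ℝ) ^ (-t))))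
          (interior (square ((shelf sq Sside (n.1 - n₀)).1, (shelf sq Sside (n.1 - n₀)).2.1)
            ((nthTwinPrime (n : ℕ) : ℝ) ^ (-t)))) := by
      intro m n hmn
      have hkm : n₀ + (m.1 - n₀) = m.1 := Nat.add_sub_cancel' m.2
      have hkn : n₀ + (n.1 - n₀) = n.1 := Nat.add_sub_cancel' n.2
      set k1 := m.1 - n₀ with hk1def
      set k2 := n.1 - n₀ with hk2def
      have hk12 : k1 < k2 := by omega
      have hsm : ((nthTwinPrime (m : ℕ) : ℕ) : ℝ) ^ (-t) = sq k1 := by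
        rw [hsqdef]; dsimp only; rw [hkm]
      have hsn : ((nthTwinPrime (n : ℕ) : ℕ) : ℝ) ^ (-t) = sq k2 := by
        rw [hsqdef]; dsimp only; rw [hkn]
      rw [hsm, hsn, square, square]
      rw [interior_prod_eq, interior_prod_eq, interior_Icc, interior_Icc, interior_Icc,
        interior_Icc]
      dsimp only
      rcases shelf_order hsqmono hsqpos hk12 with hcase | ⟨hy, hh, hx⟩
      · -- different shelves: y-coordinates disjoint
        rw [Set.disjoint_left]
        rintro ⟨px, py⟩ hp1 hp2
        simp only [Set.mem_prod, Set.mem_Ioo] at hp1 hp2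
        have h1 := (shelf_h_le hsqmono (S := Sside) k1).1
        have := hp1.2.2
        have := hp2.2.1
        linarith [hp1.2.2, hp2.2.1, hcase, h1]
      · -- same shelf: x-coordinates disjoint
        rw [Set.disjoint_left]
        rintro ⟨px, py⟩ hp1 hp2
        simp only [Set.mem_prod, Set.mem_Ioo] at hp1 hp2
        linarith [hp1.1.2, hp2.1.1, hx]
    intro a b hab
    have hne : a.1 ≠ b.1 := fun h => hab (Subtype.ext h)
    rcases lt_or_gt_of_ne hne with h | h
    · exact key a b h
    · exact (key b a h).symm
end

section
/- Assume there are infinitely many twin primes (so that the n-th twin prime 𝔭_n is defined for all n), and assume there exist constants C > 0, c > 0 and x₁ ≥ 2 such that π₂(x) ≤ C·Π₂·x/(log x)²·(1 + c·(log log x)/(log x)) for all x ≥ x₁. Then for every C' > C there exists a positive integer N(C') such that 𝔭_n ≥ (n/(C'·Π₂))·(log n)² for all n ≥ N(C'). -/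
/-!
Since `π₂(𝔭ₙ) = n`, the hypothesis at `x = 𝔭ₙ` reads
`n ≤ C Π₂ 𝔭ₙ / (log 𝔭ₙ)² · (1 + o(1))`, and for large `n` the factor `C (1 + o(1))` is below `C'`.
Solving for `𝔭ₙ` needs `Π₂ > 0`, which the same inequality gives because its left side is `n ≥ 1`;
finally `log n ≤ log 𝔭ₙ` as `n ≤ 𝔭ₙ`.
-/

open Filter Real

instance inst_s15 : DecidablePred IsTwinPrime := fun p =>
  inferInstanceAs (Decidable (Nat.Prime p ∧ (Nat.Prime (p - 2) ∨ Nat.Prime (p + 2))))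

lemma IsTwinPrime.three_le {p : ℕ} (hp : IsTwinPrime p) : 3 ≤ p := by
  by_contra! h
  interval_cases p <;> revert hp <;> decide

lemma twinPrimeCounting_natCast (m : ℕ) :
    twinPrimeCounting m = Nat.count IsTwinPrime (m + 1) := by
  rw [twinPrimeCounting, Nat.count_eq_card_filter_range, ← Set.ncard_coe_finset]
  congr 1
  ext p
  simp [and_comm]

section Infinite

variable (hinf : {p : ℕ | IsTwinPrime p}.Infinite)
include hinf

lemma le_nthTwinPrime (n : ℕ) : n ≤ nthTwinPrime n := by
  have h := (Nat.nth_strictMono (p := IsTwinPrime) hinf).add_le_nat (n - 1) 0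
  have h₀ := (Nat.nth_mem_of_infinite (p := IsTwinPrime) hinf 0).three_le
  rw [add_zero] at h
  rw [nthTwinPrime]
  omega

lemma twinPrimeCounting_nthTwinPrime {n : ℕ} (hn : n ≠ 0) :
    twinPrimeCounting (nthTwinPrime n) = n := by
  rw [twinPrimeCounting_natCast, nthTwinPrime, Nat.count_nth_succ_of_infinite hinf]
  omega

end Infinite

lemma tendsto_one_add_mul_log_log_div_log (c : ℝ) :
    Tendsto (fun x => 1 + c * log (log x) / log x) atTop (nhds 1) := by
  have h := (isLittleO_log_id_atTop.tendsto_div_nhds_zero).comp tendsto_log_atTop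
  simpa [mul_div_assoc] using (h.const_mul c).const_add 1

lemma div_mul_log_sq_le {n P K : ℝ} (hn : 1 ≤ n) (hnP : n ≤ P) (hK : 0 < K)
    (h : n ≤ K * P / log P ^ 2) : n / K * log n ^ 2 ≤ P := by
  have hlogP : 0 < log P ^ 2 :=
    (sq_nonneg _).lt_of_ne fun h0 => by rw [← h0, div_zero] at h; linarith
  have hlog : log n ^ 2 ≤ log P ^ 2 :=
    pow_le_pow_left₀ (log_nonneg hn) (log_le_log (by linarith) hnP) 2
  calc n / K * log n ^ 2 ≤ n / K * log P ^ 2 := by gcongr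
    _ ≤ P := by
      rw [le_div_iff₀ hlogP] at h
      rw [div_mul_eq_mul_div, div_le_iff₀ hK]
      linarith

theorem nth_twin_prime_lower_bound_general
    (hinf : {p : ℕ | IsTwinPrime p}.Infinite)
    (C c x₁ : ℝ) (hC : 0 < C)
    (hbound : ∀ x : ℝ, x₁ ≤ x →
      (twinPrimeCounting x : ℝ) ≤
        C * twinPrimeConstant * x / Real.log x ^ 2 *
          (1 + c * Real.log (Real.log x) / Real.log x))
    (C' : ℝ) (hC' : C < C') :
    ∃ N : ℕ, 0 < N ∧ ∀ n : ℕ, N ≤ n →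
      (n : ℝ) / (C' * twinPrimeConstant) * Real.log (n : ℝ) ^ 2 ≤ (nthTwinPrime n : ℝ) := by
  have hg := tendsto_one_add_mul_log_log_div_log c
  obtain ⟨T, hT⟩ := eventually_atTop.mp <| (eventually_ge_atTop x₁).and <|
    (hg.eventually_const_lt zero_lt_one).and
      (hg.eventually_lt_const ((one_lt_div hC).mpr hC'))
  refine ⟨max 1 ⌈T⌉₊, by positivity, fun n hn => ?_⟩
  set P := nthTwinPrime n
  have hn1 : (1 : ℝ) ≤ n := by exact_mod_cast (le_max_left _ _).trans hn
  have hnP : (n : ℝ) ≤ P := by exact_mod_cast le_nthTwinPrime hinf n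
  obtain ⟨hPx₁, hg0, hgC⟩ := hT P <|
    (Nat.le_ceil T).trans <| (Nat.cast_le.mpr ((le_max_right _ _).trans hn)).trans hnP
  set g := 1 + c * log (log P) / log P
  have hCg : C * g ≤ C' := ((lt_div_iff₀' hC).mp hgC).le
  have hcount : (n : ℝ) ≤ C * twinPrimeConstant * P / log P ^ 2 * g := by
    have h := hbound P hPx₁
    rwa [show twinPrimeCounting P = n from twinPrimeCounting_nthTwinPrime hinf (by omega)] at h
  have hconst : 0 < twinPrimeConstant := by
    refine pos_of_mul_pos_left (b := C * P / log P ^ 2 * g) ?_ (mul_nonneg (by positivity) hg0.le)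
    linarith [show C * twinPrimeConstant * P / log P ^ 2 * g
      = twinPrimeConstant * (C * P / log P ^ 2 * g) by ring]
  refine div_mul_log_sq_le hn1 hnP (mul_pos (hC.trans hC') hconst) (hcount.trans ?_)
  calc C * twinPrimeConstant * P / log P ^ 2 * g
      = twinPrimeConstant * P / log P ^ 2 * (C * g) := by ring
    _ ≤ twinPrimeConstant * P / log P ^ 2 * C' := by gcongr
    _ = C' * twinPrimeConstant * P / log P ^ 2 := by ring

theorem nth_twin_prime_lower_bound
    (hinf : {p : ℕ | IsTwinPrime p}.Infinite)
    (C c x₁ : ℝ) (hC : 0 < C) (hc : 0 < c) (hx₁ : 2 ≤ x₁)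
    (hbound : ∀ x : ℝ, x₁ ≤ x →
      (twinPrimeCounting x : ℝ) ≤
        C * twinPrimeConstant * x / Real.log x ^ 2 *
          (1 + c * Real.log (Real.log x) / Real.log x))
    (C' : ℝ) (hC' : C < C') :
    ∃ N : ℕ, 0 < N ∧ ∀ n : ℕ, N ≤ n →
      (n : ℝ) / (C' * twinPrimeConstant) * Real.log (n : ℝ) ^ 2 ≤ (nthTwinPrime n : ℝ) :=
  nth_twin_prime_lower_bound_general hinf C c x₁ hC hbound C' hC'
end
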